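/- The series ∑_{n≥0} (C(2n,n)/4^n)² / ((4n+3)(1-4n)) equals 1/π. -/

import Mathlib

/-!
Squaring `C(2n,n)/4^n` gives `1/((2n+1) W n)`, where `W n` is the `n`-th Wallis product.
In this form the series telescopes: its partial sum up to `N` is `(2N+1)/((4N+3) W N)`,
which tends to `(1/2)/(π/2) = 1/π` by Wallis' formula `W N → π/2`.
-/

open Filter Finset Real Real.Wallis Topology

lemma centralBinom_div_four_pow_succ (n : ℕ) :
    (Nat.centralBinom (n + 1) : ℝ) / 4 ^ (n + 1) =
      Nat.centralBinom n / 4 ^ n * ((2 * n + 1) / (2 * n + 2)) := by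
  have h : ((n : ℝ) + 1) * Nat.centralBinom (n + 1) = 2 * (2 * n + 1) * Nat.centralBinom n := by
    exact_mod_cast Nat.succ_mul_centralBinom_succ n
  field_simp
  linear_combination 4 ^ n * 2 * h

lemma centralBinom_div_four_pow_sq (n : ℕ) :
    ((Nat.centralBinom n : ℝ) / 4 ^ n) ^ 2 = ((2 * n + 1) * W n)⁻¹ := by
  induction n with
  | zero => simp [W]
  | succ n ih =>
    rw [centralBinom_div_four_pow_succ, mul_pow, ih, W_succ]
    have := W_pos n
    push_cast
    field_simp
    ring

lemma summable_centralBinom_div_four_pow_sq_div :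
    Summable fun n : ℕ => ((Nat.centralBinom n : ℝ) / 4 ^ n) ^ 2 / ((4 * n + 3) * (1 - 4 * n)) := by
  refine .of_norm_bounded_eventually_nat (g := fun n : ℕ => 1 / (n : ℝ) ^ 2)
    (summable_one_div_nat_pow.mpr one_lt_two) ?_
  filter_upwards [eventually_ge_atTop 1] with n hn_pos
  have hn : (1 : ℝ) ≤ n := by exact_mod_cast hn_pos
  have hc : ((Nat.centralBinom n : ℝ) / 4 ^ n) ^ 2 ≤ 1 := by
    refine pow_le_one₀ (by positivity) ((div_le_one (by positivity)).mpr ?_)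
    exact_mod_cast Nat.centralBinom_le_four_pow n
  rw [norm_div, norm_mul, Real.norm_of_nonneg (by positivity), Real.norm_of_nonneg (by positivity),
    Real.norm_of_nonpos (by linarith)]
  gcongr
  nlinarith

lemma sum_range_succ_centralBinom_div_four_pow_sq_div (N : ℕ) :
    ∑ n ∈ range (N + 1), ((Nat.centralBinom n : ℝ) / 4 ^ n) ^ 2 / ((4 * n + 3) * (1 - 4 * n)) =
      (2 * N + 1) / ((4 * N + 3) * W N) := by
  induction N with
  | zero => simp [W]
  | succ N ih =>
    rw [sum_range_succ, ih, centralBinom_div_four_pow_sq, W_succ]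
    have := W_pos N
    have : (1 : ℝ) - 4 * (N + 1) ≠ 0 := by linarith
    push_cast
    field_simp
    ring

lemma tendsto_two_mul_add_one_div_four_mul_add_three :
    Tendsto (fun N : ℕ => (2 * N + 1 : ℝ) / (4 * N + 3)) atTop (𝓝 (1 / 2)) := by
  have h : Tendsto (fun N : ℕ => (4 * N + 3 : ℝ)⁻¹) atTop (𝓝 0) :=
    tendsto_inv_atTop_zero.comp <| tendsto_atTop_add_const_right _ _ <|
      tendsto_natCast_atTop_atTop.const_mul_atTop (by norm_num)
  convert (tendsto_const_nhds (x := (1 / 2 : ℝ))).sub (h.const_mul (1 / 2)) using 1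
  · ext N
    field_simp
    ring
  · simp

lemma tendsto_two_mul_add_one_div_four_mul_add_three_mul_W :
    Tendsto (fun N : ℕ => (2 * N + 1 : ℝ) / ((4 * N + 3) * W N)) atTop (𝓝 (1 / π)) := by
  convert tendsto_two_mul_add_one_div_four_mul_add_three.mul
    (tendsto_W_nhds_pi_div_two.inv₀ pi_div_two_pos.ne') using 1
  · ext N
    rw [div_mul_eq_div_div, div_eq_mul_inv]
  · field_simp

theorem stmt_10 :
    ∑' n : ℕ, ((Nat.centralBinom n : ℝ) / 4 ^ n) ^ 2 /
      ((4 * (n : ℝ) + 3) * (1 - 4 * n)) = 1 / Real.pi := by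
  refine (summable_centralBinom_div_four_pow_sq_div.hasSum_iff_tendsto_nat.mpr ?_).tsum_eq
  rw [← tendsto_add_atTop_iff_nat 1]
  simp_rw [sum_range_succ_centralBinom_div_four_pow_sq_div]
  exact tendsto_two_mul_add_one_div_four_mul_add_three_mul_W
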